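/- Let S be a completely regular ordered semigroup. A bi-ideal B of S is minimal if and only if B(a) = B(e) for every a ∈ B and every ordered idempotent e ∈ B. -/
import Mathlib


open Pointwise

variable {S : Type*} [Semigroup S] [PartialOrder S]
  [CovariantClass S S (· * ·) (· ≤ ·)]
  [CovariantClass S S (Function.swap (· * ·)) (· ≤ ·)]

/-- The downward closure `(H] = {t : t ≤ h for some h ∈ H}`. -/
def ocl (H : Set S) : Set S := {t | ∃ h ∈ H, t ≤ h}
/-- Principal left ideal `L(a) = (a ∪ Sa]`. -/
def pL (a : S) : Set S := ocl ({a} ∪ Set.univ * {a})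
/-- Principal right ideal `R(a) = (a ∪ aS]`. -/
def pR (a : S) : Set S := ocl ({a} ∪ {a} * Set.univ)
/-- Principal bi-ideal `B(a) = (a ∪ a² ∪ aSa]`. -/
def pB (a : S) : Set S := ocl ({a} ∪ {a * a} ∪ {a} * Set.univ * {a})
def LIdeal (I : Set S) : Prop := I.Nonempty ∧ Set.univ * I ⊆ I ∧ ocl I = I
def RIdeal (I : Set S) : Prop := I.Nonempty ∧ I * Set.univ ⊆ I ∧ ocl I = I
def BIdeal (B : Set S) : Prop :=
  B.Nonempty ∧ B * B ⊆ B ∧ B * Set.univ * B ⊆ B ∧ ocl B = B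
def MinBIdeal (B : Set S) : Prop :=
  BIdeal B ∧ ∀ K : Set S, BIdeal K → K ⊆ B → K = B
def MinLIdeal (I : Set S) : Prop :=
  LIdeal I ∧ ∀ K : Set S, LIdeal K → K ⊆ I → K = I
def MinRIdeal (I : Set S) : Prop :=
  RIdeal I ∧ ∀ K : Set S, RIdeal K → K ⊆ I → K = I
def OrdRegular (S : Type*) [Semigroup S] [PartialOrder S] : Prop :=
  ∀ a : S, ∃ s : S, a ≤ a * s * a
def ComplRegular (S : Type*) [Semigroup S] [PartialOrder S] : Prop :=
  ∀ a : S, ∃ s : S, a ≤ a * a * s * (a * a)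
/-- Green's H relation. -/
def HGreen (a b : S) : Prop := pL a = pL b ∧ pR a = pR b
/-- The relation β : `a β b` iff `B(a) = B(b)`. -/
def betaRel (a b : S) : Prop := pB a = pB b

lemma mem_pB {a x : S} :
    x ∈ pB a ↔ ∃ g, (g = a ∨ g = a * a ∨ ∃ u, g = a * u * a) ∧ x ≤ g := by
  constructor
  · rintro ⟨g, hg, hle⟩
    refine ⟨g, ?_, hle⟩
    rcases hg with (hg | hg) | hg
    · exact Or.inl hg
    · exact Or.inr (Or.inl hg)
    · rcases hg with ⟨y, hy, z, hz, rfl⟩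
      rcases hy with ⟨w, hw, u, -, rfl⟩
      rcases hw with rfl
      rcases hz with rfl
      exact Or.inr (Or.inr ⟨u, rfl⟩)
  · rintro ⟨g, hg, hle⟩
    refine ⟨g, ?_, hle⟩
    rcases hg with rfl | rfl | ⟨u, rfl⟩
    · exact Or.inl (Or.inl rfl)
    · exact Or.inl (Or.inr rfl)
    · exact Or.inr ⟨a * u, ⟨a, rfl, u, trivial, rfl⟩, a, rfl, rfl⟩

lemma self_mem_pB (a : S) : a ∈ pB a := mem_pB.2 ⟨a, Or.inl rfl, le_rfl⟩

/-- each generator of `pB a` has the form `a` or `a * u`. -/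
lemma gen_right {a g : S} (hg : g = a ∨ g = a * a ∨ ∃ u, g = a * u * a) :
    g = a ∨ ∃ u, g = a * u := by
  rcases hg with rfl | rfl | ⟨u, rfl⟩
  · exact Or.inl rfl
  · exact Or.inr ⟨a, rfl⟩
  · exact Or.inr ⟨u * a, by simp [mul_assoc]⟩

lemma gen_left {a g : S} (hg : g = a ∨ g = a * a ∨ ∃ u, g = a * u * a) :
    g = a ∨ ∃ v, g = v * a := by
  rcases hg with rfl | rfl | ⟨u, rfl⟩
  · exact Or.inl rfl
  · exact Or.inr ⟨a, rfl⟩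
  · exact Or.inr ⟨a * u, rfl⟩

lemma pB_biideal (a : S) : BIdeal (pB a) := by
  refine ⟨⟨a, self_mem_pB a⟩, ?_, ?_, ?_⟩
  · rintro x ⟨y, hy, z, hz, rfl⟩
    obtain ⟨g1, hg1, hy⟩ := mem_pB.1 hy
    obtain ⟨g2, hg2, hz⟩ := mem_pB.1 hz
    refine mem_pB.2 ⟨g1 * g2, ?_, mul_le_mul' hy hz⟩
    rcases gen_right hg1 with rfl | ⟨u, rfl⟩ <;>
      rcases gen_left hg2 with rfl | ⟨v, rfl⟩
    · exact Or.inr (Or.inl rfl)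
    · exact Or.inr (Or.inr ⟨v, by simp [mul_assoc]⟩)
    · exact Or.inr (Or.inr ⟨u, by simp [mul_assoc]⟩)
    · exact Or.inr (Or.inr ⟨u * v, by simp [mul_assoc]⟩)
  · rintro x ⟨w, ⟨y, hy, s, -, rfl⟩, z, hz, rfl⟩
    obtain ⟨g1, hg1, hy⟩ := mem_pB.1 hy
    obtain ⟨g2, hg2, hz⟩ := mem_pB.1 hz
    refine mem_pB.2 ⟨g1 * s * g2, ?_, mul_le_mul' (mul_le_mul' hy le_rfl) hz⟩
    rcases gen_right hg1 with rfl | ⟨u, rfl⟩ <;>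
      rcases gen_left hg2 with rfl | ⟨v, rfl⟩
    · exact Or.inr (Or.inr ⟨s, rfl⟩)
    · exact Or.inr (Or.inr ⟨s * v, by simp [mul_assoc]⟩)
    · exact Or.inr (Or.inr ⟨u * s, by simp [mul_assoc]⟩)
    · exact Or.inr (Or.inr ⟨u * s * v, by simp [mul_assoc]⟩)
  · apply Set.Subset.antisymm
    · rintro x ⟨y, ⟨g, hg, hyg⟩, hxy⟩
      exact ⟨g, hg, hxy.trans hyg⟩
    · exact fun x hx => ⟨x, hx, le_rfl⟩

lemma pB_subset {a : S} {B : Set S} (hB : BIdeal B) (ha : a ∈ B) :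
    pB a ⊆ B := by
  rintro x hx
  obtain ⟨g, hg, hle⟩ := mem_pB.1 hx
  have hgB : g ∈ B := by
    rcases hg with rfl | rfl | ⟨u, rfl⟩
    · exact ha
    · exact hB.2.1 ⟨a, ha, a, ha, rfl⟩
    · exact hB.2.2.1 ⟨a * u, ⟨a, ha, u, trivial, rfl⟩, a, ha, rfl⟩
  rw [← hB.2.2.2]
  exact ⟨g, hgB, hle⟩

theorem stmt14 (h : ComplRegular S) (B : Set S) (hB : BIdeal B) :
    MinBIdeal B ↔ ∀ a ∈ B, ∀ e ∈ B, e ≤ e * e → pB a = pB e := by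
  constructor
  · intro hmin a ha e he _
    have h1 := hmin.2 (pB a) (pB_biideal a) (pB_subset hB ha)
    have h2 := hmin.2 (pB e) (pB_biideal e) (pB_subset hB he)
    rw [h1, h2]
  · intro hyp
    refine ⟨hB, fun K hK hKB => Set.Subset.antisymm hKB ?_⟩
    obtain ⟨k, hk⟩ := hK.1
    obtain ⟨s, hs⟩ := h k
    set e := k * (k * s) * k with he_def
    have hkh : k ≤ k * (k * s * k) * k := by
      calc k ≤ k * k * s * (k * k) := hs
        _ = k * (k * s * k) * k := by simp [mul_assoc]
    have heK : e ∈ K := hK.2.2.1 ⟨k * (k * s), ⟨k, hk, k * s, trivial, rfl⟩, k, hk, rfl⟩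
    have hidem : e ≤ e * e := by
      have := mul_le_mul_left hkh (k * s * k)
      calc e = k * (k * s * k) := by simp [he_def, mul_assoc]
        _ ≤ k * (k * s * k) * k * (k * s * k) := this
        _ = e * e := by simp [he_def, mul_assoc]
    intro a ha
    have h1 : pB a = pB e := hyp a ha e (hKB heK) hidem
    have h2 : pB k = pB e := hyp k (hKB hk) e (hKB heK) hidem
    have : a ∈ pB k := by rw [h2, ← h1]; exact self_mem_pB a
    exact pB_subset hK hk this
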